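/- For odd n ≥ 3, the group presented by ⟨a, b | b(ab)^{(n-1)/2} b (ab)^{(n-3)/2} = (ab)^{(n-1)/2}(ba)^{(n-1)/2}, ab(ba)^{(n-1)/2} b (ba)^{(n-3)/2} = b(ba)^{(n-1)/2} b² (ab)^{(n-3)/2}⟩ is isomorphic to ℤ. -/

import Mathlib

/-- The free group on two generators. -/
abbrev F : Type := FreeGroup (Fin 2)

/-- The generator `a`. -/
def a : F := FreeGroup.of 0

/-- The generator `b`. -/
def b : F := FreeGroup.of 1

/-- The relators of `⟨a, b | b(ab)^{(n-1)/2} b (ab)^{(n-3)/2} = (ab)^{(n-1)/2}(ba)^{(n-1)/2},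
ab(ba)^{(n-1)/2} b (ba)^{(n-3)/2} = b(ba)^{(n-1)/2} b² (ab)^{(n-3)/2}⟩`. -/
def rels (n : ℕ) : Set F :=
  {b * (a * b) ^ ((n - 1) / 2) * b * (a * b) ^ ((n - 3) / 2) *
     ((a * b) ^ ((n - 1) / 2) * (b * a) ^ ((n - 1) / 2))⁻¹,
   a * b * (b * a) ^ ((n - 1) / 2) * b * (b * a) ^ ((n - 3) / 2) *
     (b * (b * a) ^ ((n - 1) / 2) * b ^ 2 * (a * b) ^ ((n - 3) / 2))⁻¹}

/-!
Put `u = AB`, so that `B = A⁻¹u` and `BA = A⁻¹uA`; both relations become words in `A` and `u`.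
With `W = A⁻¹u^{m+2}A⁻¹`, the first relation reads `W u^{m+1} = u^{m+1} · A⁻¹u^{m+1}A`, and
substituting this into the second leaves `u W u^m = W u^{m+1}`, i.e. `W` commutes with `u`.
The first relation then gives `W = A⁻¹u^{m+1}A`, hence `uA⁻¹ = A`, i.e. `B = A`.
So the presented group is cyclic on `a`, and it surjects onto `ℤ` because every relator has
exponent sum zero.
-/

theorem eq_of_relations {G : Type*} [Group G] {A B : G} {m : ℕ}
    (h₁ : B * (A * B) ^ (m + 1) * B * (A * B) ^ m = (A * B) ^ (m + 1) * (B * A) ^ (m + 1))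
    (h₂ : A * B * (B * A) ^ (m + 1) * B * (B * A) ^ m =
      B * (B * A) ^ (m + 1) * B ^ 2 * (A * B) ^ m) :
    B = A := by
  obtain ⟨u, rfl⟩ : ∃ u, B = A⁻¹ * u := ⟨A * B, by group⟩
  have hconj (j : ℕ) : (A⁻¹ * u * A) ^ j = A⁻¹ * u ^ j * A := by
    simpa using (map_pow (MulAut.conj A⁻¹) u j).symm
  simp only [mul_inv_cancel_left, hconj] at h₁ h₂
  set W := A⁻¹ * u ^ (m + 2) * A⁻¹ with hW
  have e₁ : W * u ^ (m + 1) = u ^ (m + 1) * (A⁻¹ * u ^ (m + 1) * A) := by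
    rw [← h₁, hW]; group
  have e₂ : u * W * u ^ m = W * u ^ (m + 1) := by
    refine mul_right_cancel (b := A) ?_
    calc u * W * u ^ m * A
        = u * (A⁻¹ * u ^ (m + 1) * A) * (A⁻¹ * u) * (A⁻¹ * u ^ m * A) := by rw [hW]; group
      _ = _ := h₂
      _ = A⁻¹ * u * (W * u ^ (m + 1)) := by rw [hW, sq]; group
      _ = A⁻¹ * u * (u ^ (m + 1) * (A⁻¹ * u ^ (m + 1) * A)) := by rw [e₁]
      _ = W * u ^ (m + 1) * A := by rw [hW]; group
  have hcomm : Commute u W :=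
    mul_right_cancel (b := u ^ m) (by rw [e₂, pow_succ', mul_assoc W])
  have hW' : W = A⁻¹ * u ^ (m + 1) * A :=
    mul_left_cancel (a := u ^ (m + 1)) (by rw [← e₁, (hcomm.pow_left (m + 1)).eq])
  have hu : u * A⁻¹ = A :=
    mul_left_cancel (a := A⁻¹ * u ^ (m + 1)) (by rw [← hW', hW]; group)
  calc A⁻¹ * u = A⁻¹ * (u * A⁻¹) * A := by group
    _ = A := by rw [hu]; group

def PresentedGroup.mulEquivIntOfOfEq {α : Type*} {rels : Set (FreeGroup α)} (i₀ : α)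
    (hof : ∀ i, PresentedGroup.of (rels := rels) i = .of i₀)
    (hrels : ∀ r ∈ rels, FreeGroup.lift (fun _ => Multiplicative.ofAdd (1 : ℤ)) r = 1) :
    PresentedGroup rels ≃* Multiplicative ℤ :=
  MonoidHom.toMulEquiv (PresentedGroup.toGroup hrels) (zpowersHom _ (.of i₀))
    (PresentedGroup.ext fun i => by simp [PresentedGroup.toGroup.of, hof i])
    (MonoidHom.ext_mint (by simp [PresentedGroup.toGroup.of]))

theorem presentedGroup_odd_case_iso_int_general (n : ℕ) (h3 : 3 ≤ n) :
    Nonempty (PresentedGroup (rels n) ≃* Multiplicative ℤ) := by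
  obtain ⟨m, hm₁, hm₂⟩ : ∃ m, (n - 1) / 2 = m + 1 ∧ (n - 3) / 2 = m :=
    ⟨(n - 3) / 2, by omega, rfl⟩
  have hrel₁ := PresentedGroup.one_of_mem (rels := rels n) (Set.mem_insert _ _)
  have hrel₂ := PresentedGroup.one_of_mem (rels := rels n) (Set.mem_insert_of_mem _ rfl)
  simp only [hm₁, hm₂, map_mul, map_inv, map_pow, mul_inv_eq_one] at hrel₁ hrel₂
  have hba : PresentedGroup.of (rels := rels n) 1 = .of 0 := eq_of_relations hrel₁ hrel₂
  refine ⟨PresentedGroup.mulEquivIntOfOfEq 0 (Fin.forall_fin_two.2 ⟨rfl, hba⟩) ?_⟩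
  rintro r (rfl | rfl) <;>
  · apply Multiplicative.toAdd.injective
    simp only [a, b, hm₁, hm₂, map_mul, map_inv, map_pow, FreeGroup.lift_apply_of, toAdd_mul,
      toAdd_inv, toAdd_pow, toAdd_ofAdd, toAdd_one]
    ring

/-- For odd `n ≥ 3`, the group
`⟨a, b | b(ab)^{(n-1)/2} b (ab)^{(n-3)/2} = (ab)^{(n-1)/2}(ba)^{(n-1)/2},
ab(ba)^{(n-1)/2} b (ba)^{(n-3)/2} = b(ba)^{(n-1)/2} b² (ab)^{(n-3)/2}⟩`
is isomorphic to `ℤ`. -/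
theorem presentedGroup_odd_case_iso_int (n : ℕ) (hn : Odd n) (h3 : 3 ≤ n) :
    Nonempty (PresentedGroup (rels n) ≃* Multiplicative ℤ) :=
  presentedGroup_odd_case_iso_int_general n h3
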